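/- arXiv:1711.03773 — 2 statements merged into one kernel-verified Lean document; each statement's English description precedes it below -/
import Mathlib

section
/- Critical points of the Schwarzschild 3-body potential at non-collinear configurations: Let q₀ = (q₁₀, q₂₀, q₃₀) ∈ Ω be such that the three points q₁₀, q₂₀, q₃₀ ∈ ℝ² are not collinear. Then ∇U(q₀) = 0 if and only if r₁₂(q₀) = √(−3B₁₂/A₁₂), r₁₃(q₀) = √(−3B₁₃/A₁₃) and r₂₃(q₀) = √(−3B₂₃/A₂₃). -/
/-- Configuration space of three point particles in the plane. -/
noncomputable abbrev SchwConf := PiLp 2 fun _ : Fin 3 => EuclideanSpace ℝ (Fin 2)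

/-- The Schwarzschild 3-body potential
`U(q) = Σ_{1 ≤ i < j ≤ 3} (A_ij/r_ij(q) + B_ij/r_ij(q)³)`, where `r_ij(q) = ‖q_i − q_j‖`. -/
noncomputable def schwU3 (A12 B12 A13 B13 A23 B23 : ℝ) (q : SchwConf) : ℝ :=
  (A12 / ‖q 0 - q 1‖ + B12 / ‖q 0 - q 1‖ ^ 3) +
  (A13 / ‖q 0 - q 2‖ + B13 / ‖q 0 - q 2‖ ^ 3) +
  (A23 / ‖q 1 - q 2‖ + B23 / ‖q 1 - q 2‖ ^ 3)

/-!
Each pair term `q ↦ 𝒰(‖q_i - q_j‖)` has gradient `c (q_i - q_j)` in slot `i` and `-c (q_i - q_j)`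
in slot `j`, where `c = 𝒰'(r) / r`. In the first slot of `∇U(q₀)` this gives
`c₁₂ (q₁ - q₂) + c₁₃ (q₁ - q₃)`, and non-collinearity makes `q₁ - q₂, q₁ - q₃` linearly
independent, so `∇U(q₀) = 0` forces `c₁₂ = c₁₃ = 0`, and then the second slot forces `c₂₃ = 0`.
Finally `𝒰'(r) = -A/r² - 3B/r⁴` vanishes for `r > 0` exactly when `r² = -3B/A`.
-/

open Real

section Collinear

variable {k V : Type*} [Field k] [AddCommGroup V] [Module k V]

theorem eq_zero_of_smul_sub_add_smul_sub_eq_zero_of_not_collinear {p₀ p₁ p₂ : V}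
    (h : ¬Collinear k ({p₀, p₁, p₂} : Set V)) {a b : k}
    (hab : a • (p₀ - p₁) + b • (p₀ - p₂) = 0) : a = 0 ∧ b = 0 := by
  have hw := (affineIndependent_iff_not_collinear_set.2 h).eq_zero_of_sum_eq_zero
    (s := Finset.univ) (w := ![a + b, -a, -b]) (by simp [Fin.sum_univ_three])
    (by
      simp only [Fin.sum_univ_three, Matrix.cons_val_zero, Matrix.cons_val_one, Matrix.cons_val]
      rw [← hab]
      module)
  exact ⟨neg_eq_zero.1 (hw 1 (Finset.mem_univ _)), neg_eq_zero.1 (hw 2 (Finset.mem_univ _))⟩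

end Collinear

section InnerProductSpace

variable {E : Type*} [NormedAddCommGroup E] [InnerProductSpace ℝ E]

theorem hasFDerivAt_norm_of_ne_zero {x : E} (hx : x ≠ 0) :
    HasFDerivAt (‖·‖) (‖x‖⁻¹ • innerSL ℝ x) x := by
  have h := (hasStrictFDerivAt_norm_sq x).hasFDerivAt.sqrt (by positivity)
  simp only [sqrt_sq (norm_nonneg _)] at h
  refine h.congr_fderiv ?_
  ext y
  simp only [one_div, mul_inv_rev, smul_apply, coe_innerSL_apply,
    nsmul_eq_mul, Nat.cast_ofNat, smul_eq_mul]
  field_simp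

theorem HasDerivAt.comp_norm {φ : ℝ → ℝ} {φ' : ℝ} {x : E} (hφ : HasDerivAt φ φ' ‖x‖)
    (hx : x ≠ 0) : HasFDerivAt (fun y => φ ‖y‖) ((φ' / ‖x‖) • innerSL ℝ x) x := by
  refine (hφ.comp_hasFDerivAt x (hasFDerivAt_norm_of_ne_zero hx)).congr_fderiv ?_
  rw [smul_smul, div_eq_mul_inv]

variable {ι : Type*} [Fintype ι]

noncomputable def projSub (i j : ι) : (PiLp 2 fun _ : ι => E) →L[ℝ] E :=
  PiLp.proj (𝕜 := ℝ) 2 (fun _ : ι => E) i - PiLp.proj (𝕜 := ℝ) 2 (fun _ : ι => E) j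

theorem HasDerivAt.comp_norm_sub_apply {φ : ℝ → ℝ} {φ' : ℝ} {q : PiLp 2 fun _ : ι => E}
    {i j : ι} (hφ : HasDerivAt φ φ' ‖q i - q j‖) (hq : q i ≠ q j) :
    HasFDerivAt (fun p : PiLp 2 (fun _ : ι => E) => φ ‖p i - p j‖)
      ((φ' / ‖q i - q j‖) • (innerSL ℝ (q i - q j)).comp (projSub i j)) q := by
  rw [← ContinuousLinearMap.smul_comp]
  exact (hφ.comp_norm (sub_ne_zero.2 hq)).comp q (projSub i j).hasFDerivAt

noncomputable def pairGradient (c₁₂ c₁₃ c₂₃ : ℝ) (q : PiLp 2 fun _ : Fin 3 => E) :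
    PiLp 2 fun _ : Fin 3 => E :=
  WithLp.toLp 2 ![c₁₂ • (q 0 - q 1) + c₁₃ • (q 0 - q 2), c₂₃ • (q 1 - q 2) - c₁₂ • (q 0 - q 1),
    -(c₁₃ • (q 0 - q 2)) - c₂₃ • (q 1 - q 2)]

theorem toDual_pairGradient [CompleteSpace E] (c₁₂ c₁₃ c₂₃ : ℝ) (q : PiLp 2 fun _ : Fin 3 => E) :
    InnerProductSpace.toDual ℝ _ (pairGradient c₁₂ c₁₃ c₂₃ q) =
      c₁₂ • (innerSL ℝ (q 0 - q 1)).comp (projSub 0 1) +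
        c₁₃ • (innerSL ℝ (q 0 - q 2)).comp (projSub 0 2) +
        c₂₃ • (innerSL ℝ (q 1 - q 2)).comp (projSub 1 2) := by
  ext h
  simp only [pairGradient, projSub, InnerProductSpace.toDual_apply_apply, PiLp.inner_apply,
    Fin.sum_univ_three, Matrix.cons_val_zero, Matrix.cons_val_one, Matrix.cons_val,
    inner_add_left, inner_sub_left, inner_neg_left, real_inner_smul_left, map_sub,
    ContinuousLinearMap.comp_sub, ContinuousLinearMap.sub_comp, add_apply,
    smul_apply, sub_apply, ContinuousLinearMap.comp_apply,
    PiLp.proj_apply, coe_innerSL_apply, smul_eq_mul]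
  ring

theorem pairGradient_eq_zero_iff {c₁₂ c₁₃ c₂₃ : ℝ} {q : PiLp 2 fun _ : Fin 3 => E}
    (hq : ¬Collinear ℝ ({q 0, q 1, q 2} : Set E)) :
    pairGradient c₁₂ c₁₃ c₂₃ q = 0 ↔ c₁₂ = 0 ∧ c₁₃ = 0 ∧ c₂₃ = 0 := by
  constructor
  · intro h
    have h₀ : c₁₂ • (q 0 - q 1) + c₁₃ • (q 0 - q 2) = 0 := congr($h 0)
    obtain ⟨rfl, rfl⟩ := eq_zero_of_smul_sub_add_smul_sub_eq_zero_of_not_collinear hq h₀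
    have h₁ : c₂₃ • (q 1 - q 2) = 0 := by simpa [pairGradient] using congr($h 1)
    exact ⟨rfl, rfl, (smul_eq_zero.1 h₁).resolve_right (sub_ne_zero.2 (ne₂₃_of_not_collinear hq))⟩
  · rintro ⟨rfl, rfl, rfl⟩
    ext i : 1
    fin_cases i <;> simp [pairGradient]

end InnerProductSpace

theorem hasDerivAt_div_add_div_pow_three (A B : ℝ) {r : ℝ} (hr : r ≠ 0) :
    HasDerivAt (fun r => A / r + B / r ^ 3) (-A / r ^ 2 - 3 * B / r ^ 4) r := by
  refine (((hasDerivAt_const r A).fun_div (hasDerivAt_id' r) hr).fun_add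
    ((hasDerivAt_const r B).fun_div (hasDerivAt_pow 3 r) (pow_ne_zero 3 hr))).congr_deriv ?_
  field_simp
  ring

/-- `𝒰'(r) / r` for the pair potential `𝒰(r) = A / r + B / r ^ 3`. -/
noncomputable def schwWeight (A B r : ℝ) : ℝ := (-A / r ^ 2 - 3 * B / r ^ 4) / r

theorem schwWeight_eq_zero_iff {A B r : ℝ} (hA : A ≠ 0) (hr : 0 < r) :
    schwWeight A B r = 0 ↔ r = √(-3 * B / A) := by
  rw [schwWeight, eq_comm (a := r), sqrt_eq_iff_mul_self_eq_of_pos hr, div_eq_zero_iff,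
    or_iff_left hr.ne']
  field_simp
  constructor <;> intro h <;> linarith

theorem hasGradientAt_schwU3 (A12 B12 A13 B13 A23 B23 : ℝ) {q : SchwConf}
    (h₀₁ : q 0 ≠ q 1) (h₀₂ : q 0 ≠ q 2) (h₁₂ : q 1 ≠ q 2) :
    HasGradientAt (schwU3 A12 B12 A13 B13 A23 B23)
      (pairGradient (schwWeight A12 B12 ‖q 0 - q 1‖) (schwWeight A13 B13 ‖q 0 - q 2‖)
        (schwWeight A23 B23 ‖q 1 - q 2‖) q) q := by
  rw [hasGradientAt_iff_hasFDerivAt, toDual_pairGradient]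
  have hr {i j : Fin 3} (h : q i ≠ q j) : ‖q i - q j‖ ≠ 0 := norm_ne_zero_iff.2 (sub_ne_zero.2 h)
  exact
    (((hasDerivAt_div_add_div_pow_three A12 B12 (hr h₀₁)).comp_norm_sub_apply h₀₁).add
      ((hasDerivAt_div_add_div_pow_three A13 B13 (hr h₀₂)).comp_norm_sub_apply h₀₂)).add
      ((hasDerivAt_div_add_div_pow_three A23 B23 (hr h₁₂)).comp_norm_sub_apply h₁₂)

theorem schwarzschild_three_body_critical_points_general
    (A12 B12 A13 B13 A23 B23 : ℝ)
    (hA12 : A12 < 0) (hA13 : A13 < 0) (hA23 : A23 < 0)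
    (q₀ : SchwConf)
    (hcol : ¬ Collinear ℝ ({q₀ 0, q₀ 1, q₀ 2} : Set (EuclideanSpace ℝ (Fin 2)))) :
    gradient (schwU3 A12 B12 A13 B13 A23 B23) q₀ = 0 ↔
      (‖q₀ 0 - q₀ 1‖ = Real.sqrt (-3 * B12 / A12) ∧
       ‖q₀ 0 - q₀ 2‖ = Real.sqrt (-3 * B13 / A13) ∧
       ‖q₀ 1 - q₀ 2‖ = Real.sqrt (-3 * B23 / A23)) := by
  have h₀₁ := ne₁₂_of_not_collinear hcol
  have h₀₂ := ne₁₃_of_not_collinear hcol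
  have h₁₂ := ne₂₃_of_not_collinear hcol
  have hr {i j : Fin 3} (h : q₀ i ≠ q₀ j) : 0 < ‖q₀ i - q₀ j‖ := norm_pos_iff.2 (sub_ne_zero.2 h)
  rw [(hasGradientAt_schwU3 A12 B12 A13 B13 A23 B23 h₀₁ h₀₂ h₁₂).gradient,
    pairGradient_eq_zero_iff hcol, schwWeight_eq_zero_iff hA12.ne (hr h₀₁),
    schwWeight_eq_zero_iff hA13.ne (hr h₀₂), schwWeight_eq_zero_iff hA23.ne (hr h₁₂)]

/-- **Critical points of the Schwarzschild 3-body potential at non-collinear configurations.**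
If the three points of `q₀` are pairwise distinct and not collinear, then `∇U(q₀) = 0` iff
`r₁₂(q₀) = √(−3B₁₂/A₁₂)`, `r₁₃(q₀) = √(−3B₁₃/A₁₃)` and `r₂₃(q₀) = √(−3B₂₃/A₂₃)`. -/
theorem schwarzschild_three_body_critical_points
    (A12 B12 A13 B13 A23 B23 : ℝ)
    (hA12 : A12 < 0) (hB12 : 0 < B12) (hA13 : A13 < 0) (hB13 : 0 < B13)
    (hA23 : A23 < 0) (hB23 : 0 < B23)
    (q₀ : SchwConf)
    (hq₀ : q₀ 0 ≠ q₀ 1 ∧ q₀ 0 ≠ q₀ 2 ∧ q₀ 1 ≠ q₀ 2)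
    (hcol : ¬ Collinear ℝ ({q₀ 0, q₀ 1, q₀ 2} : Set (EuclideanSpace ℝ (Fin 2)))) :
    gradient (schwU3 A12 B12 A13 B13 A23 B23) q₀ = 0 ↔
      (‖q₀ 0 - q₀ 1‖ = Real.sqrt (-3 * B12 / A12) ∧
       ‖q₀ 0 - q₀ 2‖ = Real.sqrt (-3 * B13 / A13) ∧
       ‖q₀ 1 - q₀ 2‖ = Real.sqrt (-3 * B23 / A23)) :=
  schwarzschild_three_body_critical_points_general A12 B12 A13 B13 A23 B23 hA12 hA13 hA23 q₀ hcol
end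

section
/- Minimality of Schwarzschild central configurations: Let q₀ = (q₁₀, q₂₀, q₃₀) ∈ Ω be such that q₁₀, q₂₀, q₃₀ are not collinear, and suppose the constants satisfy ‖q₁₀ − q₂₀‖ = √(−3B₁₂/A₁₂), ‖q₁₀ − q₃₀‖ = √(−3B₁₃/A₁₃), ‖q₂₀ − q₃₀‖ = √(−3B₂₃/A₂₃). Then ∇U(q₀) = 0 and q₀ is a global minimum of U on Ω, i.e. U(q) ≥ U(q₀) for all q ∈ Ω. -/
/-- The one-dimensional pair potential `r ↦ A/r + B/r³` (with `A < 0 < B`) attains its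
minimum over `[0, ∞)` at `s = √(−3B/A)`. -/
lemma schw_key (A B s : ℝ) (hA : A < 0) (hB : 0 < B)
    (hs : s = Real.sqrt (-3 * B / A)) :
    ∀ r : ℝ, 0 ≤ r → A / s + B / s ^ 3 ≤ A / r + B / r ^ 3 := by
  have hq : 0 < -3 * B / A := div_pos_of_neg_of_neg (by linarith) hA
  have hs0 : 0 < s := hs ▸ Real.sqrt_pos.mpr hq
  have hs2 : s ^ 2 = -3 * B / A := by rw [hs]; exact Real.sq_sqrt hq.le
  have hAs : A * s ^ 2 = -3 * B := by
    rw [hs2, mul_comm, div_mul_cancel₀ _ hA.ne]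
  have e2 : A / s + B / s ^ 3 = (A * s ^ 2 + B) / s ^ 3 := by
    field_simp
  have hval : A / s + B / s ^ 3 = -2 * B / s ^ 3 := by
    rw [e2, show A * s ^ 2 + B = -2 * B by linarith]
  intro r hr
  rcases eq_or_lt_of_le hr with h0 | hr0
  · have hz : A / r + B / r ^ 3 = 0 := by rw [← h0]; simp
    have h3 : (0:ℝ) < s ^ 3 := by positivity
    have : -2 * B / s ^ 3 < 0 := div_neg_of_neg_of_pos (by linarith) h3
    rw [hval, hz]; linarith
  · have e1 : A / r + B / r ^ 3 = (A * r ^ 2 + B) / r ^ 3 := by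
      field_simp
    rw [e1, e2, div_le_div_iff₀ (by positivity) (by positivity)]
    have h2 : A * r ^ 2 * s ^ 3 = -3 * B * (r ^ 2 * s) := by
      linear_combination r ^ 2 * s * hAs
    have h3 : A * s ^ 2 * r ^ 3 = -3 * B * r ^ 3 := by
      linear_combination r ^ 3 * hAs
    have h4 : 0 ≤ B * ((r - s) ^ 2 * (2 * r + s)) :=
      mul_nonneg hB.le (mul_nonneg (sq_nonneg _) (by linarith))
    nlinarith [h2, h3, h4]

/-- **Minimality of Schwarzschild central configurations.**
If the three points of `q₀` are pairwise distinct, not collinear, and their mutual distances are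
`√(−3B_ij/A_ij)`, then `∇U(q₀) = 0` and `q₀` is a global minimum of `U` on
`Ω = {q : q_i ≠ q_j for i ≠ j}`. -/
theorem schwarzschild_three_body_global_min
    (A12 B12 A13 B13 A23 B23 : ℝ)
    (hA12 : A12 < 0) (hB12 : 0 < B12) (hA13 : A13 < 0) (hB13 : 0 < B13)
    (hA23 : A23 < 0) (hB23 : 0 < B23)
    (q₀ : SchwConf)
    (hq₀ : q₀ 0 ≠ q₀ 1 ∧ q₀ 0 ≠ q₀ 2 ∧ q₀ 1 ≠ q₀ 2)
    (hcol : ¬ Collinear ℝ ({q₀ 0, q₀ 1, q₀ 2} : Set (EuclideanSpace ℝ (Fin 2))))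
    (hd12 : ‖q₀ 0 - q₀ 1‖ = Real.sqrt (-3 * B12 / A12))
    (hd13 : ‖q₀ 0 - q₀ 2‖ = Real.sqrt (-3 * B13 / A13))
    (hd23 : ‖q₀ 1 - q₀ 2‖ = Real.sqrt (-3 * B23 / A23)) :
    gradient (schwU3 A12 B12 A13 B13 A23 B23) q₀ = 0 ∧
    ∀ q : SchwConf, q 0 ≠ q 1 → q 0 ≠ q 2 → q 1 ≠ q 2 →
      schwU3 A12 B12 A13 B13 A23 B23 q₀ ≤ schwU3 A12 B12 A13 B13 A23 B23 q := by
  have h12 := schw_key A12 B12 _ hA12 hB12 hd12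
  have h13 := schw_key A13 B13 _ hA13 hB13 hd13
  have h23 := schw_key A23 B23 _ hA23 hB23 hd23
  -- `q₀` is a global minimum of `U` on all of the configuration space
  -- (at collision configurations the Lean value of `U`'s terms is `0`, which still
  -- dominates the negative minimum values).
  have hmin : ∀ q : SchwConf,
      schwU3 A12 B12 A13 B13 A23 B23 q₀ ≤ schwU3 A12 B12 A13 B13 A23 B23 q := by
    intro q
    unfold schwU3
    have t12 := h12 ‖q 0 - q 1‖ (norm_nonneg _)
    have t13 := h13 ‖q 0 - q 2‖ (norm_nonneg _)
    have t23 := h23 ‖q 1 - q 2‖ (norm_nonneg _)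
    linarith
  refine ⟨?_, fun q _ _ _ => hmin q⟩
  have hloc : IsLocalMin (schwU3 A12 B12 A13 B13 A23 B23) q₀ :=
    Filter.Eventually.of_forall hmin
  have hfd : fderiv ℝ (schwU3 A12 B12 A13 B13 A23 B23) q₀ = 0 :=
    hloc.fderiv_eq_zero
  simp [gradient, hfd]
end
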